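/- arXiv:1105.1071 — 5 statements merged into one kernel-verified Lean document; each statement's English description precedes it below -/
import Mathlib

section
/- In a cyclic group G of prime order q with generator g, let a, b, x, y, c, d, e be elements of ZMod q and set A = g^a, B = g^b, X = g^x, Y = g^y. Then B^(d*x) * Y^(c*a + e*x) = A^(c*y) * X^(d*b + e*y). -/
/-- Exponentiation of a group element by an exponent in `ZMod q`, via the canonical
representative; in a group of exponent `q` this is the natural `ZMod q`-power. -/
instance (priority := low) zmodPow {G : Type*} [Monoid G] {q : ℕ} : Pow G (ZMod q) :=
  ⟨fun h a => h ^ a.val⟩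

theorem oake_key_consistency {G : Type*} [CommGroup G] (q : ℕ) (hq : q.Prime) (g : G)
    (hgen : ∀ z : G, z ∈ Subgroup.zpowers g) (hord : orderOf g = q)
    (a b x y c d e : ZMod q) (A B X Y : G)
    (hA : A = g ^ a) (hB : B = g ^ b) (hX : X = g ^ x) (hY : Y = g ^ y) :
    B ^ (d * x) * Y ^ (c * a + e * x) = A ^ (c * y) * X ^ (d * b + e * y) := by
  subst hord
  haveI : Fact (orderOf g).Prime := ⟨hq⟩
  have hpow : ∀ u v : ZMod (orderOf g), (g ^ u) ^ v = g ^ (u * v) := by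
    intro u v
    show (g ^ u.val) ^ v.val = g ^ (u * v).val
    rw [← pow_mul, ZMod.val_mul, pow_mod_orderOf]
  have hmul : ∀ u v : ZMod (orderOf g), g ^ u * g ^ v = g ^ (u + v) := by
    intro u v
    show g ^ u.val * g ^ v.val = g ^ (u + v).val
    rw [← pow_add, ZMod.val_add, pow_mod_orderOf]
  subst hA hB hX hY
  rw [hpow, hpow, hpow, hpow, hmul, hmul]
  congr 1
  ring
end

section
/- In a cyclic group G of prime order q with generator g, let a, b, x, y, c, d, e be elements of ZMod q, A = g^a, B = g^b, X = g^x, Y = g^y. Then B^(a + x*d) * Y^(a*c + x*e) = A^(b + y*c) * X^(b*d + y*e). -/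
private lemma zpow_val_eq {G : Type*} [Monoid G] {q : ℕ} (g : G) (hord : orderOf g = q)
    [NeZero q] (u v : ZMod q) : g ^ (u.val * v.val) = g ^ ((u * v).val) := by
  conv_lhs => rw [← pow_mod_orderOf, hord, ← ZMod.val_mul]

private lemma zpow_add_val {G : Type*} [Monoid G] {q : ℕ} (g : G) (hord : orderOf g = q)
    [NeZero q] (u v : ZMod q) : g ^ (u.val + v.val) = g ^ ((u + v).val) := by
  conv_lhs => rw [← pow_mod_orderOf, hord, ← ZMod.val_add]

private lemma zpow_zpow {G : Type*} [Monoid G] {q : ℕ} (g : G) (hord : orderOf g = q)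
    [NeZero q] (u v : ZMod q) : (g ^ u) ^ v = g ^ (u * v) := by
  show (g ^ u.val) ^ v.val = g ^ (u * v).val
  rw [← pow_mul]
  exact zpow_val_eq g hord u v

private lemma zmodPow_add {G : Type*} [Monoid G] {q : ℕ} (g : G) (hord : orderOf g = q)
    [NeZero q] (u v : ZMod q) : g ^ (u + v) = g ^ u * g ^ v := by
  show g ^ (u + v).val = g ^ u.val * g ^ v.val
  rw [← pow_add]
  exact (zpow_add_val g hord u v).symm

theorem robust_oake_key_consistency {G : Type*} [CommGroup G] (q : ℕ) (hq : q.Prime) (g : G)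
    (hgen : ∀ z : G, z ∈ Subgroup.zpowers g) (hord : orderOf g = q)
    (a b x y c d e : ZMod q) (A B X Y : G)
    (hA : A = g ^ a) (hB : B = g ^ b) (hX : X = g ^ x) (hY : Y = g ^ y) :
    B ^ (a + x * d) * Y ^ (a * c + x * e) = A ^ (b + y * c) * X ^ (b * d + y * e) := by
  haveI : NeZero q := ⟨hq.ne_zero⟩
  subst hA hB hX hY
  rw [zpow_zpow g hord, zpow_zpow g hord, zpow_zpow g hord, zpow_zpow g hord,
    ← zmodPow_add g hord, ← zmodPow_add g hord]
  ring_nf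
end

section
/- In a cyclic group G of prime order q with generator g, let b, y₀, a, a', c₀, c₀', d₀, d₀', e₀ be elements of ZMod q with d₀ ≠ d₀', let X₀ be an element of G, Y₀ = g^(y₀), A = g^a, A' = g^(a'). If σ₀ = A^(c₀*y₀) * X₀^(b*d₀ + y₀*e₀) and σ₀' = A'^(c₀'*y₀) * X₀^(b*d₀' + y₀*e₀), then X₀^b = ((σ₀ * (Y₀^(a*c₀))⁻¹) * (σ₀' * (Y₀^(a'*c₀'))⁻¹)⁻¹)^((d₀ - d₀')⁻¹). -/
section aux
variable {G : Type*} [CommGroup G] {q : ℕ} [NeZero q]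

lemma zmodPow_def (z : G) (x : ZMod q) : z ^ x = z ^ x.val := rfl

lemma pow_natCast_zmod (z : G) (hz : z ^ q = 1) (n : ℕ) :
    z ^ ((n : ZMod q)) = z ^ n := by
  rw [zmodPow_def, ZMod.val_natCast]
  conv_rhs => rw [← Nat.div_add_mod n q, pow_add, pow_mul, hz, one_pow, one_mul]

lemma val_cast_eq (x : ZMod q) : ((x.val : ℕ) : ZMod q) = x := ZMod.natCast_rightInverse x

lemma pow_zmod_add (z : G) (hz : z ^ q = 1) (x y : ZMod q) :
    z ^ (x + y) = z ^ x * z ^ y := by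
  conv_lhs => rw [← val_cast_eq x, ← val_cast_eq y, ← Nat.cast_add,
    pow_natCast_zmod z hz, pow_add]
  rfl

lemma pow_zmod_mul (z : G) (hz : z ^ q = 1) (x y : ZMod q) :
    z ^ (x * y) = (z ^ x) ^ y := by
  conv_lhs => rw [← val_cast_eq x, ← val_cast_eq y, ← Nat.cast_mul,
    pow_natCast_zmod z hz, pow_mul]
  rfl

lemma pow_zmod_sub (z : G) (hz : z ^ q = 1) (x y : ZMod q) :
    z ^ (x - y) = z ^ x * (z ^ y)⁻¹ := by
  have h := pow_zmod_add z hz (x - y) y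
  rw [sub_add_cancel] at h
  rw [h]
  group

end aux

theorem oake_hdr_extraction_C1 {G : Type*} [CommGroup G] (q : ℕ) (hq : q.Prime) (g : G)
    (hgen : ∀ z : G, z ∈ Subgroup.zpowers g) (hord : orderOf g = q)
    (b y₀ a a' c₀ c₀' d₀ d₀' e₀ : ZMod q) (hd : d₀ ≠ d₀')
    (X₀ : G) (Y₀ A A' : G)
    (hY₀ : Y₀ = g ^ y₀) (hA : A = g ^ a) (hA' : A' = g ^ a')
    (σ₀ σ₀' : G)
    (hσ₀ : σ₀ = A ^ (c₀ * y₀) * X₀ ^ (b * d₀ + y₀ * e₀))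
    (hσ₀' : σ₀' = A' ^ (c₀' * y₀) * X₀ ^ (b * d₀' + y₀ * e₀)) :
    X₀ ^ b = ((σ₀ * (Y₀ ^ (a * c₀))⁻¹) * (σ₀' * (Y₀ ^ (a' * c₀'))⁻¹)⁻¹) ^ (d₀ - d₀')⁻¹ := by
  haveI : NeZero q := ⟨hq.ne_zero⟩
  haveI : Fact q.Prime := ⟨hq⟩
  have hexp : ∀ z : G, z ^ q = 1 := by
    intro z
    obtain ⟨k, rfl⟩ := hgen z
    rw [← zpow_natCast, ← zpow_mul, mul_comm, zpow_mul, zpow_natCast, ← hord,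
      pow_orderOf_eq_one, one_zpow]
  have hg := hexp g
  have hX := hexp X₀
  -- simplify σ₀ * (Y₀ ^ (a*c₀))⁻¹
  have h1 : σ₀ * (Y₀ ^ (a * c₀))⁻¹ = X₀ ^ (b * d₀ + y₀ * e₀) := by
    rw [hσ₀, hA, hY₀, ← pow_zmod_mul g hg, ← pow_zmod_mul g hg]
    have : a * (c₀ * y₀) = y₀ * (a * c₀) := by ring
    rw [this, mul_right_comm]
    simp
  have h2 : σ₀' * (Y₀ ^ (a' * c₀'))⁻¹ = X₀ ^ (b * d₀' + y₀ * e₀) := by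
    rw [hσ₀', hA', hY₀, ← pow_zmod_mul g hg, ← pow_zmod_mul g hg]
    have : a' * (c₀' * y₀) = y₀ * (a' * c₀') := by ring
    rw [this, mul_right_comm]
    simp
  rw [h1, h2, ← pow_zmod_sub X₀ hX]
  have h3 : b * d₀ + y₀ * e₀ - (b * d₀' + y₀ * e₀) = b * (d₀ - d₀') := by ring
  rw [h3, ← pow_zmod_mul X₀ hX, mul_assoc,
    mul_inv_cancel₀ (sub_ne_zero.mpr hd), mul_one]
end

section
/- In a cyclic group G of prime order q with generator g, let b, y₀, a, a', c₀, c₀', d₀, e₀, e₀' be elements of ZMod q with e₀ ≠ e₀' and d₀ ≠ 0, let X₀ ∈ G, Y₀ = g^(y₀), A = g^a, A' = g^(a'). If σ₀ = A^(c₀*y₀) * X₀^(b*d₀ + y₀*e₀) and σ₀' = A'^(c₀'*y₀) * X₀^(b*d₀ + y₀*e₀'), then X₀^(y₀) = ((σ₀ * (Y₀^(a*c₀))⁻¹) * (σ₀' * (Y₀^(a'*c₀'))⁻¹)⁻¹)^((e₀ - e₀')⁻¹), and X₀^b = (σ₀ * ((X₀^(y₀))^(e₀) * Y₀^(a*c₀))⁻¹)^(d₀⁻¹).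 -/
section aux

variable {G : Type*} [Monoid G] {q : ℕ} {z : G}

lemma pow_mod_exponent (hz : z ^ q = 1) (m : ℕ) : z ^ m = z ^ (m % q) := by
  conv_lhs => rw [← Nat.div_add_mod m q]
  rw [pow_add, pow_mul, hz, one_pow, one_mul]

lemma pow_zmod_congr (hz : z ^ q = 1) {m n : ℕ} (h : m ≡ n [MOD q]) : z ^ m = z ^ n := by
  rw [pow_mod_exponent hz m, pow_mod_exponent hz n, h]

lemma pz_mul [NeZero q] (hz : z ^ q = 1) (x y : ZMod q) :
    z ^ (x * y) = (z ^ x) ^ y := by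
  show z ^ (x * y).val = (z ^ x.val) ^ y.val
  rw [← pow_mul]
  exact pow_zmod_congr hz (by simp [Nat.ModEq, ZMod.val_mul, Nat.mod_mod_of_dvd])

lemma pz_add [NeZero q] (hz : z ^ q = 1) (x y : ZMod q) :
    z ^ (x + y) = z ^ x * z ^ y := by
  show z ^ (x + y).val = z ^ x.val * z ^ y.val
  rw [← pow_add]
  exact pow_zmod_congr hz (by simp [Nat.ModEq, ZMod.val_add, Nat.mod_mod_of_dvd])

lemma pz_one [Fact (1 < q)] : z ^ (1 : ZMod q) = z := by
  show z ^ (1 : ZMod q).val = z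
  rw [ZMod.val_one, pow_one]

end aux

theorem oake_hdr_extraction_C2 {G : Type*} [CommGroup G] (q : ℕ) (hq : q.Prime) (g : G)
    (hgen : ∀ z : G, z ∈ Subgroup.zpowers g) (hord : orderOf g = q)
    (b y₀ a a' c₀ c₀' d₀ e₀ e₀' : ZMod q) (he : e₀ ≠ e₀') (hd : d₀ ≠ 0)
    (X₀ : G) (Y₀ A A' : G)
    (hY₀ : Y₀ = g ^ y₀) (hA : A = g ^ a) (hA' : A' = g ^ a')
    (σ₀ σ₀' : G)
    (hσ₀ : σ₀ = A ^ (c₀ * y₀) * X₀ ^ (b * d₀ + y₀ * e₀))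
    (hσ₀' : σ₀' = A' ^ (c₀' * y₀) * X₀ ^ (b * d₀ + y₀ * e₀')) :
    X₀ ^ y₀ = ((σ₀ * (Y₀ ^ (a * c₀))⁻¹) * (σ₀' * (Y₀ ^ (a' * c₀'))⁻¹)⁻¹) ^ (e₀ - e₀')⁻¹ ∧
      X₀ ^ b = (σ₀ * ((X₀ ^ y₀) ^ e₀ * Y₀ ^ (a * c₀))⁻¹) ^ d₀⁻¹ := by
  haveI : Fact q.Prime := ⟨hq⟩
  haveI : Fact (1 < q) := ⟨hq.one_lt⟩
  haveI : NeZero q := ⟨hq.pos.ne'⟩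
  have hz : ∀ z : G, z ^ q = 1 := by
    intro z
    obtain ⟨k, rfl⟩ := hgen z
    have h1 : g ^ q = 1 := by rw [← hord]; exact pow_orderOf_eq_one g
    rw [← zpow_natCast, ← zpow_mul, mul_comm, zpow_mul, zpow_natCast, h1, one_zpow]
  have pm : ∀ (z : G) (x y : ZMod q), z ^ (x * y) = (z ^ x) ^ y := fun z => pz_mul (hz z)
  have pa : ∀ (z : G) (x y : ZMod q), z ^ (x + y) = z ^ x * z ^ y := fun z => pz_add (hz z)
  have cancel : ∀ (z : G) (t : ZMod q), t ≠ 0 → (z ^ t) ^ t⁻¹ = z := by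
    intro z t ht
    rw [← pm, mul_inv_cancel₀ ht, pz_one]
  have key1 : σ₀ * (Y₀ ^ (a * c₀))⁻¹ = X₀ ^ (b * d₀) * (X₀ ^ y₀) ^ e₀ := by
    have h1 : A ^ (c₀ * y₀) = Y₀ ^ (a * c₀) := by
      rw [hA, hY₀, ← pm, ← pm]; congr 1; ring
    rw [hσ₀, h1, pa, pm X₀ y₀ e₀]
    simp [mul_comm, mul_left_comm, mul_assoc]
  have key1' : σ₀' * (Y₀ ^ (a' * c₀'))⁻¹ = X₀ ^ (b * d₀) * (X₀ ^ y₀) ^ e₀' := by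
    have h1 : A' ^ (c₀' * y₀) = Y₀ ^ (a' * c₀') := by
      rw [hA', hY₀, ← pm, ← pm]; congr 1; ring
    rw [hσ₀', h1, pa, pm X₀ y₀ e₀']
    simp [mul_comm, mul_left_comm, mul_assoc]
  have aux_q : ∀ p s t : G, (p * s) * (p * t)⁻¹ = s * t⁻¹ := by
    intro p s t
    rw [mul_inv, mul_mul_mul_comm, mul_inv_cancel, one_mul]
  constructor
  · have hsplit : (X₀ ^ y₀) ^ e₀ = (X₀ ^ y₀) ^ (e₀ - e₀') * (X₀ ^ y₀) ^ e₀' := by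
      rw [← pm, ← pm, ← pm, ← pa]; congr 1; ring
    have hquot : (σ₀ * (Y₀ ^ (a * c₀))⁻¹) * (σ₀' * (Y₀ ^ (a' * c₀'))⁻¹)⁻¹
        = (X₀ ^ y₀) ^ (e₀ - e₀') := by
      rw [key1, key1', aux_q, hsplit, mul_inv_cancel_right]
    rw [hquot, cancel _ _ (sub_ne_zero_of_ne he)]
  · have hquot : σ₀ * ((X₀ ^ y₀) ^ e₀ * Y₀ ^ (a * c₀))⁻¹ = (X₀ ^ b) ^ d₀ := by
      calc σ₀ * ((X₀ ^ y₀) ^ e₀ * Y₀ ^ (a * c₀))⁻¹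
          = σ₀ * (Y₀ ^ (a * c₀))⁻¹ * ((X₀ ^ y₀) ^ e₀)⁻¹ := by
            simp [mul_comm, mul_left_comm, mul_assoc, mul_inv]
        _ = X₀ ^ (b * d₀) * (X₀ ^ y₀) ^ e₀ * ((X₀ ^ y₀) ^ e₀)⁻¹ := by rw [key1]
        _ = X₀ ^ (b * d₀) := mul_inv_cancel_right _ _
        _ = (X₀ ^ b) ^ d₀ := pm _ _ _
    rw [hquot, cancel _ _ hd]
end

section
/- In a cyclic group G of prime order q with generator g, let b, y₀, a, a', e₀, e₀' be elements of ZMod q with e₀ ≠ e₀', let X₀ ∈ G, Y₀ = g^(y₀), A = g^a, A' = g^(a'). If σ₀ = A^(y₀) * X₀^(b + y₀*e₀) and σ₀' = A'^(y₀) * X₀^(b + y₀*e₀'), then X₀^(y₀) = ((σ₀ * (Y₀^a)⁻¹) * (σ₀' * (Y₀^(a'))⁻¹)⁻¹)^((e₀ - e₀')⁻¹), and X₀^b = σ₀ * ((X₀^(y₀))^(e₀) * Y₀^a)⁻¹. -/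
section Aux

variable {G : Type*} [CommGroup G] {q : ℕ}

lemma aux_pow_mod (h : G) (hh : h ^ q = 1) (n : ℕ) : h ^ (n % q) = h ^ n := by
  conv_rhs => rw [← Nat.div_add_mod n q]
  rw [pow_add, pow_mul, hh, one_pow, one_mul]

lemma aux_zpow_add [NeZero q] (h : G) (hh : h ^ q = 1) (x y : ZMod q) :
    h ^ (x + y) = h ^ x * h ^ y := by
  show h ^ (x + y).val = h ^ x.val * h ^ y.val
  rw [← pow_add, ZMod.val_add, aux_pow_mod h hh]

lemma aux_zpow_mul [NeZero q] (h : G) (hh : h ^ q = 1) (x y : ZMod q) :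
    h ^ (x * y) = (h ^ x) ^ y := by
  show h ^ (x * y).val = (h ^ x.val) ^ y.val
  rw [← pow_mul, ZMod.val_mul, aux_pow_mod h hh]

lemma aux_zpow_sub [NeZero q] (h : G) (hh : h ^ q = 1) (x y : ZMod q) :
    h ^ (x - y) = h ^ x * (h ^ y)⁻¹ := by
  have := aux_zpow_add h hh (x - y) y
  rw [sub_add_cancel] at this
  rw [this]; group

end Aux

theorem soake_hdr_extraction {G : Type*} [CommGroup G] (q : ℕ) (hq : q.Prime) (g : G)
    (hgen : ∀ z : G, z ∈ Subgroup.zpowers g) (hord : orderOf g = q)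
    (b y₀ a a' e₀ e₀' : ZMod q) (he : e₀ ≠ e₀')
    (X₀ : G) (Y₀ A A' : G)
    (hY₀ : Y₀ = g ^ y₀) (hA : A = g ^ a) (hA' : A' = g ^ a')
    (σ₀ σ₀' : G)
    (hσ₀ : σ₀ = A ^ y₀ * X₀ ^ (b + y₀ * e₀))
    (hσ₀' : σ₀' = A' ^ y₀ * X₀ ^ (b + y₀ * e₀')) :
    X₀ ^ y₀ = ((σ₀ * (Y₀ ^ a)⁻¹) * (σ₀' * (Y₀ ^ a')⁻¹)⁻¹) ^ (e₀ - e₀')⁻¹ ∧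
      X₀ ^ b = σ₀ * ((X₀ ^ y₀) ^ e₀ * Y₀ ^ a)⁻¹ := by
  haveI : Fact q.Prime := ⟨hq⟩
  haveI : NeZero q := ⟨hq.ne_zero⟩
  -- every element satisfies h ^ q = 1
  have hall : ∀ h : G, h ^ q = 1 := by
    intro h
    obtain ⟨k, hk⟩ := hgen h
    have hgq : g ^ q = 1 := by rw [← hord]; exact pow_orderOf_eq_one g
    rw [← hk, ← zpow_natCast, ← zpow_mul, mul_comm, zpow_mul, zpow_natCast, hgq, one_zpow]
  have hone : ∀ h : G, h ^ (1 : ZMod q) = h := by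
    intro h
    show h ^ (1 : ZMod q).val = h
    haveI : Fact (1 < q) := ⟨hq.one_lt⟩
    rw [ZMod.val_one, pow_one]
  -- commuting exponents through g
  have hAy : A ^ y₀ = Y₀ ^ a := by
    rw [hA, hY₀, ← aux_zpow_mul g (hall g), ← aux_zpow_mul g (hall g), mul_comm]
  have hAy' : A' ^ y₀ = Y₀ ^ a' := by
    rw [hA', hY₀, ← aux_zpow_mul g (hall g), ← aux_zpow_mul g (hall g), mul_comm]
  have hX := hall X₀
  have hr1 : σ₀ * (Y₀ ^ a)⁻¹ = X₀ ^ (b + y₀ * e₀) := by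
    rw [hσ₀, hAy]; simp [mul_assoc, mul_comm, mul_left_comm]
  have hr2 : σ₀' * (Y₀ ^ a')⁻¹ = X₀ ^ (b + y₀ * e₀') := by
    rw [hσ₀', hAy']; simp [mul_assoc, mul_comm, mul_left_comm]
  have hde : (e₀ - e₀') ≠ 0 := sub_ne_zero_of_ne he
  have hinv : (e₀ - e₀') * (e₀ - e₀')⁻¹ = 1 := mul_inv_cancel₀ hde
  have hratio : (σ₀ * (Y₀ ^ a)⁻¹) * (σ₀' * (Y₀ ^ a')⁻¹)⁻¹ = X₀ ^ (y₀ * (e₀ - e₀')) := by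
    rw [hr1, hr2, ← aux_zpow_sub X₀ hX]
    congr 1; ring
  have h1 : X₀ ^ y₀ = ((σ₀ * (Y₀ ^ a)⁻¹) * (σ₀' * (Y₀ ^ a')⁻¹)⁻¹) ^ (e₀ - e₀')⁻¹ := by
    rw [hratio, ← aux_zpow_mul X₀ hX]
    have : y₀ * (e₀ - e₀') * (e₀ - e₀')⁻¹ = y₀ := by
      rw [mul_assoc, hinv, mul_one]
    rw [this]
  refine ⟨h1, ?_⟩
  have h2 : (X₀ ^ y₀) ^ e₀ = X₀ ^ (y₀ * e₀) := (aux_zpow_mul X₀ hX y₀ e₀).symm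
  rw [hσ₀, hAy, h2, aux_zpow_add X₀ hX]
  simp [mul_assoc, mul_comm, mul_left_comm]
end
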